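/- arXiv:1911.12479 — 2 statements merged into one kernel-verified Lean document; each statement's English description precedes it below -/
import Mathlib

section
/- For s a positive integer, let (b_1,…,b_{s+1}) and (k_1,…,k_s) be compositions of non-negative integers with 1 ≤ k_i ≤ b_1+⋯+b_{s+1} for all i, and suppose there exists a permutation w of {1,…,s} and non-negative integers t_1,…,t_s such that, with w(0) := 0 and k_0 := 0, k_{w(j)} − k_{w(j−1)} = b_{w(j)} + t_j for 1 ≤ j ≤ s, t_1+⋯+t_s ≤ b_{s+1}, and t_j > 0 whenever w(j−1) < w(j). Let m be a non-negative integer and set b_0 := −(b_1+⋯+b_{s+1}). Then in ℚ(q) there exist integers n_1,…,n_{b_{s+1}} such that −∑_{i=0}^{s} ((1−q^{b_i})/(1−q)) · q^{k_s−k_i−χ(i<m)} = q^{n_1}+⋯+q^{n_{b_{s+1}}}, where k_0 := 0 and χ is the 0/1 indicator. -/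
/-!
The `i`-th summand with `i ≥ 1` is the sum of `q^x` over the integer interval
`[e_i, e_i + b_i)`, where `e_i = k_s - k_i - χ(i<m)`, and the negated `i = 0` summand is the
sum over `[e_0 - B, e_0)`, with `B = b_1+⋯+b_{s+1}`. Taken in the order `w(1), w(2), …` these
intervals descend: the recursion for `k`, with `t_j > 0` whenever `w(j-1) < w(j)`, gives
`e_{w(j)} + b_{w(j)} ≤ e_{w(j-1)}`. So they are disjoint and lie in `[e_0 - B, e_0)` (the lower
end because `k_i ≤ B`), and the left side is the sum of `q^x` over the complement, which has
`B - (b_1+⋯+b_s) = b_{s+1}` elements.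
-/

noncomputable section

/-- The field `K = ℚ(q)`. -/
abbrev KK : Type := RatFunc ℚ

/-- The indeterminate `q ∈ ℚ(q)`. -/
def qq : KK := RatFunc.X

open Finset

section GeometricBlocks

variable {K : Type*} [Field K] {q : K}

theorem geom_div_mul_zpow_eq_sum_Ico (hq : q ≠ 0) (hq1 : q ≠ 1) (n : ℕ) (e : ℤ) :
    (1 - q ^ (n : ℤ)) / (1 - q) * q ^ e = ∑ x ∈ Ico e (e + n), q ^ x := by
  have hq1' : 1 - q ≠ 0 := sub_ne_zero.2 hq1.symm
  induction n with
  | zero => simp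
  | succ n ih =>
    rw [Nat.cast_succ, ← add_assoc, Ico_add_one_right_eq_Icc,
      ← Ico_insert_right (by omega), sum_insert right_notMem_Ico, ← ih, zpow_add₀ hq e,
      zpow_add_one₀ hq]
    field_simp
    ring

theorem neg_geom_div_mul_zpow_eq_sum_Ico (hq : q ≠ 0) (hq1 : q ≠ 1) (n : ℕ) (e : ℤ) :
    -((1 - q ^ (-(n : ℤ))) / (1 - q) * q ^ e) = ∑ x ∈ Ico (e - n) e, q ^ x := by
  have h : -((1 - q ^ (-(n : ℤ))) * q ^ e) = (1 - q ^ (n : ℤ)) * q ^ (e - n) := by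
    rw [zpow_sub₀ hq, zpow_neg]
    field_simp
    ring
  have hIco : Ico (e - n) e = Ico (e - n) (e - n + n) := by rw [sub_add_cancel]
  rw [hIco, ← geom_div_mul_zpow_eq_sum_Ico hq hq1, div_mul_eq_mul_div, div_mul_eq_mul_div,
    ← neg_div, h]

theorem neg_sum_range_geom_eq (hq : q ≠ 0) (hq1 : q ≠ 1) (B : ℕ) (b : ℕ → ℕ) (e : ℕ → ℤ)
    (s : ℕ) :
    -(∑ i ∈ range (s + 1),
        (1 - q ^ (if i = 0 then -(B : ℤ) else (b i : ℤ))) / (1 - q) * q ^ e i) =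
      ∑ x ∈ Ico (e 0 - B) (e 0), q ^ x - ∑ i ∈ Icc 1 s, ∑ x ∈ Ico (e i) (e i + b i), q ^ x := by
  rw [range_eq_Ico, sum_eq_sum_Ico_succ_bot (by omega), Ico_add_one_right_eq_Icc, if_pos rfl,
    neg_add, neg_geom_div_mul_zpow_eq_sum_Ico hq hq1, ← sub_eq_add_neg]
  congr 1
  refine sum_congr rfl fun i hi => ?_
  rw [if_neg (Nat.one_le_iff_ne_zero.1 (mem_Icc.1 hi).1), geom_div_mul_zpow_eq_sum_Ico hq hq1]

end GeometricBlocks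

theorem qq_ne_zero : qq ≠ 0 := RatFunc.X_ne_zero

theorem qq_ne_one : qq ≠ 1 := by
  rw [qq, ← RatFunc.algebraMap_X, ← map_one (algebraMap (Polynomial ℚ) (RatFunc ℚ)),
    (RatFunc.algebraMap_injective ℚ).ne_iff, ← sub_ne_zero, ← Polynomial.C_1]
  exact Polynomial.X_sub_C_ne_zero 1

theorem Finset.exists_fin_sum_eq_sum {α M : Type*} [AddCommMonoid M] (T : Finset α) {n : ℕ}
    (hn : #T = n) (f : α → M) : ∃ g : Fin n → α, ∑ r, f (g r) = ∑ x ∈ T, f x := by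
  subst hn
  refine ⟨fun r => T.equivFin.symm r, ?_⟩
  rw [← sum_coe_sort T]
  exact Fintype.sum_equiv T.equivFin.symm _ _ fun _ => rfl

theorem Finset.exists_fin_sum_eq_sum_sub_sum_of_pairwiseDisjoint {ι α M : Type*} [DecidableEq α]
    [AddCommGroup M] {P : Finset α} {S : Finset ι} {J : ι → Finset α}
    (hdisj : (S : Set ι).PairwiseDisjoint J) (hsub : ∀ i ∈ S, J i ⊆ P) {n : ℕ}
    (hcard : #P = ∑ i ∈ S, #(J i) + n) (f : α → M) :
    ∃ g : Fin n → α, ∑ r, f (g r) = ∑ x ∈ P, f x - ∑ i ∈ S, ∑ x ∈ J i, f x := by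
  have hN : S.biUnion J ⊆ P := biUnion_subset.2 hsub
  rw [← sum_biUnion hdisj, ← sum_sdiff_eq_sub hN]
  refine (P \ S.biUnion J).exists_fin_sum_eq_sum ?_ f
  rw [card_sdiff_of_subset hN, card_biUnion hdisj]
  omega

theorem add_le_of_forall_add_le_pred {f : ℕ → ℤ} {len : ℕ → ℕ} {s : ℕ}
    (h : ∀ j, 1 ≤ j → j ≤ s → f j + len j ≤ f (j - 1)) {i j : ℕ} (hij : i < j) (hj : j ≤ s) :
    f j + len j ≤ f i := by
  induction j with
  | zero => omega
  | succ j ih =>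
    have hstep := h (j + 1) (by omega) hj
    rw [Nat.add_sub_cancel] at hstep
    rcases (Nat.lt_succ_iff.1 hij).eq_or_lt with rfl | hlt
    · exact hstep
    · have := ih hlt (by omega)
      omega

def termExponent (k : ℕ → ℕ) (s m i : ℕ) : ℤ :=
  (k s : ℤ) - (if i = 0 then 0 else (k i : ℤ)) - (if i < m then 1 else 0)

section TermExponent

variable {k : ℕ → ℕ} {s m : ℕ}

theorem termExponent_add_le {b : ℕ → ℕ} {u v t : ℕ}
    (hrec : (if v = 0 then 0 else k v) = (if u = 0 then 0 else k u) + b v + t)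
    (hpos : u < v → 0 < t) : termExponent k s m v + b v ≤ termExponent k s m u := by
  -- if `t = 0` then `v ≤ u`, and `χ(· < m)` is antitone
  unfold termExponent
  split_ifs at * <;> omega

theorem termExponent_zero_sub_le {B i : ℕ} (hi : i ≠ 0) (hk : k i ≤ B) :
    termExponent k s m 0 - B ≤ termExponent k s m i := by
  unfold termExponent
  split_ifs <;> omega

end TermExponent

theorem pairwiseDisjoint_Ico_of_surjOn {s : ℕ} {w b : ℕ → ℕ} {e : ℕ → ℤ}
    (hw : Set.SurjOn w (Set.Icc 1 s) (Set.Icc 1 s))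
    (hchain : ∀ i j, i < j → j ≤ s → e (w j) + b (w j) ≤ e (w i)) :
    ((Icc 1 s : Finset ℕ) : Set ℕ).PairwiseDisjoint fun i => Ico (e i) (e i + b i) := by
  have hdisj_of_lt : ∀ j j', j < j' → j' ≤ s →
      Disjoint (Ico (e (w j)) (e (w j) + b (w j))) (Ico (e (w j')) (e (w j') + b (w j'))) :=
    fun j j' hlt hj' => disjoint_left.2 fun x hx hx' => by
      have := hchain j j' hlt hj'
      simp only [mem_Ico] at hx hx'
      omega
  intro i hi i' hi' hne
  obtain ⟨j, hj, rfl⟩ := hw (by simpa using hi)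
  obtain ⟨j', hj', rfl⟩ := hw (by simpa using hi')
  rcases lt_trichotomy j j' with hlt | rfl | hlt
  · exact hdisj_of_lt j j' hlt hj'.2
  · exact absurd rfl hne
  · exact (hdisj_of_lt j' j hlt hj.2).symm

theorem alphabet_substitution_general (s : ℕ) (b k t w : ℕ → ℕ) (m : ℕ)
    (hk : ∀ i, 1 ≤ i → i ≤ s → 1 ≤ k i ∧ k i ≤ ∑ j ∈ Finset.Icc 1 (s+1), b j)
    (hw0 : w 0 = 0) (hbij : Set.BijOn w (Set.Icc 1 s) (Set.Icc 1 s))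
    (hrec : ∀ j, 1 ≤ j → j ≤ s →
      (if w j = 0 then 0 else k (w j)) =
        (if w (j-1) = 0 then 0 else k (w (j-1))) + b (w j) + t j)
    (htpos : ∀ j, 1 ≤ j → j ≤ s → w (j-1) < w j → 0 < t j) :
    ∃ nn : Fin (b (s+1)) → ℤ,
      -(∑ i ∈ Finset.range (s+1),
          ((1 - qq ^ (if i = 0 then -(∑ j ∈ Finset.Icc 1 (s+1), (b j : ℤ)) else (b i : ℤ)))
              / (1 - qq)) *
            qq ^ ((k s : ℤ) - (if i = 0 then 0 else (k i : ℤ)) -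
              (if i < m then 1 else 0))) =
        ∑ r, qq ^ (nn r) := by
  set B := ∑ j ∈ Icc 1 (s + 1), b j
  set e := termExponent k s m
  have hchain : ∀ i j, i < j → j ≤ s → e (w j) + b (w j) ≤ e (w i) := fun i j =>
    add_le_of_forall_add_le_pred (f := e ∘ w) fun j hj hjs =>
      termExponent_add_le (hrec j hj hjs) (htpos j hj hjs)
  have hsub : ∀ i ∈ Icc 1 s, Ico (e i) (e i + b i) ⊆ Ico (e 0 - B) (e 0) := by
    intro i hi
    obtain ⟨j, hj, rfl⟩ := hbij.surjOn (by simpa using hi)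
    have htop := hchain 0 j hj.1 hj.2
    rw [hw0] at htop
    have hwj := hbij.mapsTo hj
    have hbot : e 0 - B ≤ e (w j) :=
      termExponent_zero_sub_le (Nat.one_le_iff_ne_zero.1 hwj.1) (hk (w j) hwj.1 hwj.2).2
    exact Ico_subset_Ico hbot htop
  have hcard : #(Ico (e 0 - B) (e 0)) = ∑ i ∈ Icc 1 s, #(Ico (e i) (e i + b i)) + b (s + 1) := by
    simp only [Int.card_Ico, sub_sub_cancel, add_sub_cancel_left, Int.toNat_natCast, B]
    exact sum_Icc_succ_top (by omega) b
  obtain ⟨g, hg⟩ := exists_fin_sum_eq_sum_sub_sum_of_pairwiseDisjoint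
    (pairwiseDisjoint_Ico_of_surjOn hbij.surjOn hchain) hsub hcard (qq ^ ·)
  refine ⟨g, ?_⟩
  rw [← Nat.cast_sum]
  exact (neg_sum_range_geom_eq qq_ne_zero qq_ne_one B b e s).trans hg.symm

/-- **Proposition 5.5.** Suppose `s ≥ 1`, `(b_1,…,b_{s+1})` and `(k_1,…,k_s)` are
compositions with `1 ≤ k_i ≤ b_1+⋯+b_{s+1}`, and case (3) of the tournament lemma holds:
there is a bijection `w` of `{1,…,s}` (with `w(0) = 0`, `k_0 = 0`) and non-negative
integers `t_j` with `k_{w(j)} = k_{w(j-1)} + b_{w(j)} + t_j`, `t_1+⋯+t_s ≤ b_{s+1}`, and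
`t_j > 0` whenever `w(j-1) < w(j)`.  Let `m ≥ 0` and `b_0 := -(b_1+⋯+b_{s+1})`.  Then
there exist integers `n_1,…,n_{b_{s+1}}` with
`-∑_{i=0}^s ((1-q^{b_i})/(1-q)) q^{k_s-k_i-χ(i<m)} = q^{n_1}+⋯+q^{n_{b_{s+1}}}` in `ℚ(q)`. -/
theorem alphabet_substitution (s : ℕ) (hs : 1 ≤ s) (b k t w : ℕ → ℕ) (m : ℕ)
    (hk : ∀ i, 1 ≤ i → i ≤ s → 1 ≤ k i ∧ k i ≤ ∑ j ∈ Finset.Icc 1 (s+1), b j)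
    (hw0 : w 0 = 0) (hbij : Set.BijOn w (Set.Icc 1 s) (Set.Icc 1 s))
    (hrec : ∀ j, 1 ≤ j → j ≤ s →
      (if w j = 0 then 0 else k (w j)) =
        (if w (j-1) = 0 then 0 else k (w (j-1))) + b (w j) + t j)
    (htsum : (∑ j ∈ Finset.Icc 1 s, t j) ≤ b (s+1))
    (htpos : ∀ j, 1 ≤ j → j ≤ s → w (j-1) < w j → 0 < t j) :
    ∃ nn : Fin (b (s+1)) → ℤ,
      -(∑ i ∈ Finset.range (s+1),
          ((1 - qq ^ (if i = 0 then -(∑ j ∈ Finset.Icc 1 (s+1), (b j : ℤ)) else (b i : ℤ)))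
              / (1 - qq)) *
            qq ^ ((k s : ℤ) - (if i = 0 then 0 else (k i : ℤ)) -
              (if i < m then 1 else 0))) =
        ∑ r, qq ^ (nn r) :=
  alphabet_substitution_general s b k t w m hk hw0 hbij hrec htpos

end
end

section
/- (Dyson's constant term identity.) Let n ≥ 0 and let a_0,…,a_n be non-negative integers. Then CT_x ∏_{0≤i≠j≤n}(1−x_i/x_j)^{a_i} = (a_0+a_1+⋯+a_n)! / (a_0! a_1! ⋯ a_n!). -/
noncomputable section

/-- Laurent polynomials in `x_0, …, x_{N-1}` over `ℚ`. -/
abbrev LQ (N : ℕ) : Type := AddMonoidAlgebra ℚ (Fin N →₀ ℤ)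

/-- The Laurent monomial `x_i^e`. -/
def XmQ {N : ℕ} (i : Fin N) (e : ℤ) : LQ N := AddMonoidAlgebra.single (Finsupp.single i e) 1

/-- Constant term: the coefficient of `x_0^0 ⋯ x_{N-1}^0`. -/
def CTQ {N : ℕ} (f : LQ N) : ℚ := f.coeff 0

/-!
Good's proof. With `P_i = ∏_{k ≠ i} (1 - x_i/x_k)` the Dyson product is `F_a = ∏_i P_i ^ a_i`.
Lagrange interpolation of the constant `1` at the nodes `x_i`, evaluated at `0`, gives
`∑_j P_j⁻¹ = 1` in the field of fractions, hence `F_a = ∑_j F_{a - e_j}` whenever all `a_j > 0`: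
the recursion of the multinomial coefficients. If `a_j = 0`, then `x_j` only occurs in the factors
`(1 - x_i/x_j)^{a_i}`, which are `1` plus terms of negative degree in `x_j`, so they do not change
the constant term and `x_j` can be dropped. Induction on the number of variables and on `∑ a_i`.
-/

open Finset AddMonoidAlgebra Function

theorem Nat.sum_mul_multinomial_update {α : Type*} [DecidableEq α] {s : Finset α} {f : α → ℕ}
    {j : α} (hj : j ∈ s) (hfj : f j ≠ 0) :
    (∑ i ∈ s, f i) * Nat.multinomial s (update f j (f j - 1)) = f j * Nat.multinomial s f := by
  obtain ⟨m, hm⟩ := Nat.exists_eq_succ_of_ne_zero hfj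
  have hrest : ∀ i ∈ s.erase j, update f j (f j - 1) i = f i :=
    fun i hi => update_of_ne (ne_of_mem_erase hi) _ _
  rw [← insert_erase hj, Nat.multinomial_insert (notMem_erase j s),
    Nat.multinomial_insert (notMem_erase j s), sum_insert (notMem_erase j s),
    Nat.multinomial_congr hrest, sum_congr rfl hrest, update_self, hm, Nat.succ_sub_one,
    Nat.succ_eq_add_one, add_right_comm, ← mul_assoc,
    Nat.add_one_mul_choose_eq (m + ∑ i ∈ s.erase j, f i) m]
  ring

theorem Nat.multinomial_eq_sum_update {α : Type*} [DecidableEq α] {s : Finset α} {f : α → ℕ}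
    (hs : s.Nonempty) (hf : ∀ j ∈ s, f j ≠ 0) :
    Nat.multinomial s f = ∑ j ∈ s, Nat.multinomial s (update f j (f j - 1)) := by
  obtain ⟨j, hj⟩ := hs
  have hsum : ∑ i ∈ s, f i ≠ 0 := (sum_pos' (fun _ _ => Nat.zero_le _)
    ⟨j, hj, Nat.pos_of_ne_zero (hf j hj)⟩).ne'
  apply mul_left_cancel₀ hsum
  rw [mul_sum, sum_congr rfl fun i hi => Nat.sum_mul_multinomial_update hi (hf i hi), sum_mul]

theorem sum_prod_inv_one_sub_div_eq_one {K ι : Type*} [Field K] [DecidableEq ι] {s : Finset ι}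
    {v : ι → K} (hv : Set.InjOn v s) (hv0 : ∀ i ∈ s, v i ≠ 0) (hs : s.Nonempty) :
    ∑ j ∈ s, ∏ i ∈ s.erase j, (1 - v j / v i)⁻¹ = 1 := by
  have hbasis := congrArg (Polynomial.eval 0) (Lagrange.sum_basis hv hs)
  rw [Polynomial.eval_finsetSum, Polynomial.eval_one] at hbasis
  refine (sum_congr rfl fun j hj => ?_).trans hbasis
  rw [Lagrange.basis, Polynomial.eval_prod]
  refine prod_congr rfl fun i hi => ?_
  simp only [Lagrange.basisDivisor, Polynomial.eval_mul, Polynomial.eval_C, Polynomial.eval_sub,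
    Polynomial.eval_X, ← neg_sub (v i), inv_neg]
  rw [one_sub_div (hv0 i (mem_of_mem_erase hi)), inv_div]
  ring

section NegativeDegree

variable {k G : Type*} [AddMonoid G] (deg : G →+ ℤ)

theorem coeff_zero_mul_of_nonpos_of_neg [Semiring k] {f g : AddMonoidAlgebra k G}
    (hf : ∀ d ∈ f.coeff.support, deg d ≤ 0) (hg : ∀ d ∈ g.coeff.support, d = 0 ∨ deg d < 0) :
    (f * g).coeff 0 = f.coeff 0 * g.coeff 0 := by
  have key : UniqueAdd f.coeff.support g.coeff.support 0 0 := by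
    intro d₁ d₂ h₁ h₂ hsum
    rcases hg d₂ h₂ with rfl | hneg
    · simpa using hsum
    · have := congrArg deg hsum
      rw [map_add, add_zero, map_zero] at this
      linarith [hf d₁ h₁]
  simpa using coeff_mul_add_of_uniqueAdd key

def oneAddNegDeg [Semiring k] : Submonoid (AddMonoidAlgebra k G) where
  carrier := {g | (∀ d ∈ g.coeff.support, d = 0 ∨ deg d < 0) ∧ g.coeff 0 = 1}
  one_mem' := ⟨fun d hd => .inl (by
    rw [one_def, coeff_single] at hd
    exact mem_singleton.1 (Finsupp.support_single_subset hd)), by simp [one_def]⟩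
  mul_mem' := by
    rintro f g ⟨hf, hf1⟩ ⟨hg, hg1⟩
    refine ⟨fun d hd => ?_, ?_⟩
    · classical
      obtain ⟨d₁, h₁, d₂, h₂, rfl⟩ := mem_add.1 (support_coeff_mul_subset f g hd)
      rcases hf d₁ h₁ with rfl | h1 <;> rcases hg d₂ h₂ with rfl | h2
      · simp
      all_goals right; simp only [map_add, map_zero]; omega
    · rw [coeff_zero_mul_of_nonpos_of_neg deg
        (fun d hd => (hf d hd).elim (fun h => h ▸ (map_zero deg).le) le_of_lt) hg, hf1, hg1, mul_one]

theorem one_sub_single_mem_oneAddNegDeg [Ring k] {m : G} (hm : deg m < 0) :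
    1 - single m (1 : k) ∈ oneAddNegDeg deg := by
  have hm0 : m ≠ 0 := by rintro rfl; simp at hm
  refine ⟨fun d hd => ?_, by simp [one_def, coeff_single, hm0.symm]⟩
  by_contra! h
  have hdm : m ≠ d := by rintro rfl; exact absurd hm (not_lt.2 h.2)
  simp [one_def, coeff_single, h.1, hdm] at hd

theorem coeff_zero_mul_of_mem_gradeBy_zero [CommSemiring k] {f g : AddMonoidAlgebra k G}
    (hf : f ∈ gradeBy k deg 0) (hg : g ∈ oneAddNegDeg deg) : (f * g).coeff 0 = f.coeff 0 := by
  rw [coeff_zero_mul_of_nonpos_of_neg deg (fun d hd => (hf d hd).le) hg.1, hg.2, mul_one]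

end NegativeDegree

variable {N : ℕ}

theorem XmQ_one_mul_XmQ_neg_one (i : Fin N) : XmQ i 1 * XmQ i (-1) = 1 := by
  simp [XmQ, single_mul_single, one_def]

theorem XmQ_left_injective {e : ℤ} (he : e ≠ 0) : Injective fun i : Fin N => XmQ i e :=
  (single_left_injective one_ne_zero).comp (Finsupp.single_left_injective he)

theorem XmQ_one_mul_XmQ_neg_one_eq_single (i k : Fin N) :
    XmQ i 1 * XmQ k (-1) = single (Finsupp.single i 1 - Finsupp.single k 1) 1 := by
  simp [XmQ, single_mul_single, sub_eq_add_neg]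

theorem one_sub_XmQ_mul_XmQ_mem_oneAddNegDeg {i j : Fin N} (hij : i ≠ j) :
    1 - XmQ i 1 * XmQ j (-1) ∈ oneAddNegDeg (Finsupp.applyAddHom j) := by
  rw [XmQ_one_mul_XmQ_neg_one_eq_single]
  exact one_sub_single_mem_oneAddNegDeg _ (by simp [hij])

abbrev degZero (j : Fin N) : Subalgebra ℚ (LQ N) :=
  SetLike.GradeZero.subalgebra (gradeBy ℚ (Finsupp.applyAddHom j))

theorem one_sub_XmQ_mul_XmQ_mem_degZero {i k j : Fin N} (hi : i ≠ j) (hk : k ≠ j) :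
    1 - XmQ i 1 * XmQ k (-1) ∈ degZero j := by
  refine sub_mem (one_mem _) ?_
  rw [XmQ_one_mul_XmQ_neg_one_eq_single]
  intro d hd
  rw [coeff_single, Finsupp.support_single _ one_ne_zero, mem_singleton] at hd
  simp [hd, hi, hk]

def dysonFactor (S : Finset (Fin N)) (i : Fin N) : LQ N :=
  ∏ k ∈ S.erase i, (1 - XmQ i 1 * XmQ k (-1))

def dysonProduct (S : Finset (Fin N)) (a : Fin N → ℕ) : LQ N :=
  ∏ i ∈ S, dysonFactor S i ^ a i

theorem prod_offDiag_eq_dysonProduct (S : Finset (Fin N)) (a : Fin N → ℕ) :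
    ∏ p ∈ S.offDiag, (1 - XmQ p.1 1 * XmQ p.2 (-1)) ^ a p.1 = dysonProduct S a := by
  rw [prod_finset_product _ S (fun i => S.erase i) fun p => by
    simp only [mem_offDiag, mem_erase]; tauto]
  simp only [dysonProduct, dysonFactor, prod_pow]

theorem dysonFactor_ne_zero (S : Finset (Fin N)) (i : Fin N) : dysonFactor S i ≠ 0 :=
  prod_ne_zero_iff.2 fun k hk h => by
    simpa [h] using (one_sub_XmQ_mul_XmQ_mem_oneAddNegDeg (ne_of_mem_erase hk).symm).2

theorem dysonProduct_eq_dysonFactor_mul {S : Finset (Fin N)} {a : Fin N → ℕ} {j : Fin N}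
    (hj : j ∈ S) (hja : a j ≠ 0) :
    dysonProduct S a = dysonFactor S j * dysonProduct S (update a j (a j - 1)) := by
  rw [dysonProduct, dysonProduct, ← mul_prod_erase S _ hj, ← mul_prod_erase S _ hj, update_self,
    ← mul_assoc, ← pow_succ', Nat.sub_add_cancel (Nat.one_le_iff_ne_zero.2 hja)]
  congr 1
  exact prod_congr rfl fun i hi => by rw [update_of_ne (ne_of_mem_erase hi)]

theorem dysonProduct_eq_sum_update {S : Finset (Fin N)} {a : Fin N → ℕ} (hS : S.Nonempty)
    (ha : ∀ j ∈ S, a j ≠ 0) :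
    dysonProduct S a = ∑ j ∈ S, dysonProduct S (update a j (a j - 1)) := by
  let φ := algebraMap (LQ N) (FractionRing (LQ N))
  have hφ : Injective φ := IsFractionRing.injective _ _
  let v i := φ (XmQ i 1)
  have hv : ∀ i, v i * φ (XmQ i (-1)) = 1 := fun i => by
    rw [← map_mul, XmQ_one_mul_XmQ_neg_one, map_one]
  have hfactor : ∀ j, φ (dysonFactor S j) = ∏ k ∈ S.erase j, (1 - v j / v k) := fun j => by
    simp only [dysonFactor, map_prod, map_sub, map_one, map_mul, div_eq_mul_inv,
      eq_inv_of_mul_eq_one_right (hv _), v]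
  have hterm : ∀ j ∈ S, φ (dysonProduct S (update a j (a j - 1)))
      = φ (dysonProduct S a) * ∏ k ∈ S.erase j, (1 - v j / v k)⁻¹ := fun j hj => by
    rw [prod_inv_distrib, ← hfactor, eq_mul_inv_iff_mul_eq₀
      ((map_ne_zero_iff φ hφ).2 (dysonFactor_ne_zero S j)),
      dysonProduct_eq_dysonFactor_mul hj (ha j hj), map_mul, mul_comm]
  apply hφ
  rw [map_sum, sum_congr rfl hterm, ← mul_sum,
    sum_prod_inv_one_sub_div_eq_one (v := v) (hφ.comp (XmQ_left_injective one_ne_zero)).injOn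
      (fun i _ => left_ne_zero_of_mul_eq_one (hv i)) hS, mul_one]

theorem dysonFactor_eq_dysonFactor_erase_mul {S : Finset (Fin N)} {i j : Fin N} (hj : j ∈ S)
    (hij : i ≠ j) :
    dysonFactor S i = dysonFactor (S.erase j) i * (1 - XmQ i 1 * XmQ j (-1)) := by
  rw [dysonFactor, dysonFactor, ← mul_prod_erase _ _ (mem_erase.2 ⟨hij.symm, hj⟩),
    erase_right_comm, mul_comm]

theorem dysonProduct_eq_dysonProduct_erase_mul {S : Finset (Fin N)} {a : Fin N → ℕ} {j : Fin N}
    (hj : j ∈ S) (hja : a j = 0) :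
    dysonProduct S a =
      dysonProduct (S.erase j) a * ∏ i ∈ S.erase j, (1 - XmQ i 1 * XmQ j (-1)) ^ a i := by
  rw [dysonProduct, ← prod_erase S (f := fun i => dysonFactor S i ^ a i) (by rw [hja, pow_zero]),
    dysonProduct, ← prod_mul_distrib]
  exact prod_congr rfl fun i hi => by
    rw [dysonFactor_eq_dysonFactor_erase_mul hj (ne_of_mem_erase hi), mul_pow]

theorem dysonProduct_erase_mem_degZero (S : Finset (Fin N)) (a : Fin N → ℕ) (j : Fin N) :
    dysonProduct (S.erase j) a ∈ degZero j :=
  prod_mem fun _ hi => pow_mem (prod_mem fun _ hk => one_sub_XmQ_mul_XmQ_mem_degZero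
    (ne_of_mem_erase hi) (ne_of_mem_erase (mem_of_mem_erase hk))) _

theorem CTQ_dysonProduct_of_eq_zero {S : Finset (Fin N)} {a : Fin N → ℕ} {j : Fin N}
    (hj : j ∈ S) (hja : a j = 0) : CTQ (dysonProduct S a) = CTQ (dysonProduct (S.erase j) a) := by
  rw [CTQ, CTQ, dysonProduct_eq_dysonProduct_erase_mul hj hja]
  exact coeff_zero_mul_of_mem_gradeBy_zero _ (dysonProduct_erase_mem_degZero S a j)
    (prod_mem fun _ hi => pow_mem (one_sub_XmQ_mul_XmQ_mem_oneAddNegDeg (ne_of_mem_erase hi)) _)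

theorem CTQ_dysonProduct (S : Finset (Fin N)) (a : Fin N → ℕ) :
    CTQ (dysonProduct S a) = Nat.multinomial S a := by
  rcases S.eq_empty_or_nonempty with rfl | hS
  · simp [dysonProduct, CTQ, one_def]
  by_cases hzero : ∃ j ∈ S, a j = 0
  · obtain ⟨j, hj, hja⟩ := hzero
    rw [CTQ_dysonProduct_of_eq_zero hj hja, CTQ_dysonProduct (S.erase j) a,
      Nat.multinomial_congr_of_sdiff (erase_subset j S) (by grind) fun _ _ => rfl]
  · have ha : ∀ j ∈ S, a j ≠ 0 := fun j hj hja => hzero ⟨j, hj, hja⟩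
    rw [dysonProduct_eq_sum_update hS ha, CTQ, coeff_sum, Finsupp.finsetSum_apply,
      Nat.multinomial_eq_sum_update hS ha, Nat.cast_sum]
    exact sum_congr rfl fun j _ => CTQ_dysonProduct S (update a j (a j - 1))
termination_by (S.card, ∑ i ∈ S, a i)
decreasing_by
  · exact Prod.Lex.left _ _ (card_erase_lt_of_mem hj)
  · refine Prod.Lex.right _ (sum_lt_sum (fun i _ => ?_) ⟨j, by assumption, ?_⟩)
    · rcases eq_or_ne i j with rfl | hij
      · rw [update_self]; exact Nat.sub_le _ _
      · rw [update_of_ne hij]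
    · rw [update_self]; exact Nat.sub_lt (Nat.pos_of_ne_zero (ha j (by assumption))) one_pos

/-- **Dyson's constant term identity.** For non-negative integers `a_0,…,a_n`,
`CT ∏_{0≤i≠j≤n} (1 - x_i/x_j)^{a_i} = (a_0+⋯+a_n)! / (a_0! ⋯ a_n!)`. -/
theorem dyson_conjecture (n : ℕ) (a : Fin (n+1) → ℕ) :
    CTQ (∏ p ∈ Finset.univ.filter (fun p : Fin (n+1) × Fin (n+1) => p.1 ≠ p.2),
        (1 - XmQ p.1 1 * XmQ p.2 (-1)) ^ (a p.1)) =
      (Nat.factorial (∑ i, a i) : ℚ) / ∏ i, (Nat.factorial (a i) : ℚ) := by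
  have hoffDiag : univ.filter (fun p : Fin (n+1) × Fin (n+1) => p.1 ≠ p.2) = univ.offDiag := by
    ext; simp
  rw [hoffDiag, prod_offDiag_eq_dysonProduct, CTQ_dysonProduct, eq_div_iff (by positivity)]
  exact_mod_cast (mul_comm _ _).trans (Nat.multinomial_spec univ a)

end
end
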